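/- Assume η ≠ 1/2, and let a and b be primitive axes of Jordan type η in A, with Miyamoto automorphisms τ(a) and τ(b). Then the order of the composite automorphism τ(a) ∘ τ(b) in the automorphism group of A is 1, 2 or 3; equivalently, either τ(a) = τ(b), or (τ(a) ∘ τ(b))² = id with τ(a) ≠ τ(b), or (τ(a) ∘ τ(b))³ = id with (τ(a) ∘ τ(b))² ≠ id. -/
import Mathlib


/-- The `lam`-eigenspace of the left-multiplication operator by `x`. -/
def eigSp (F : Type*) {A : Type*} [Field F] [NonUnitalNonAssocCommRing A] [Module F A]
    [SMulCommClass F A A] (x : A) (lam : F) : Submodule F A where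
  carrier := {y | x * y = lam • y}
  add_mem' := by
    intro y z hy hz
    simp only [Set.mem_setOf_eq] at *
    rw [mul_add, hy, hz, smul_add]
  zero_mem' := by simp
  smul_mem' := by
    intro c y hy
    simp only [Set.mem_setOf_eq] at *
    rw [mul_smul_comm, hy, smul_smul, smul_smul, mul_comm]

variable {F A : Type*} [Field F] [NonUnitalNonAssocCommRing A] [Module F A]
  [SMulCommClass F A A] [IsScalarTower F A A]

/-- `a` is a primitive axis of Jordan type `η`:  it is an idempotent, `A` is the internal
direct sum of the `1`-, `0`- and `η`-eigenspaces of `ad_a` with `A_1(a) = F • a` (expressed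
as unique decomposition `x = φ • a + α + γ`), `A_0(a)` is a subalgebra, and the
`ℤ/2`-grading fusion rules hold for `A₊(a) = A_1(a) + A_0(a)`, `A₋(a) = A_η(a)`. -/
structure IsPrimitiveAxis (η : F) (a : A) : Prop where
  idem : a * a = a
  prim : eigSp F a (1 : F) = Submodule.span F {a}
  decomp : ∀ x : A, ∃! t : F × A × A,
    t.2.1 ∈ eigSp F a (0 : F) ∧ t.2.2 ∈ eigSp F a η ∧ x = t.1 • a + t.2.1 + t.2.2
  zz : ∀ y ∈ eigSp F a (0 : F), ∀ z ∈ eigSp F a (0 : F), y * z ∈ eigSp F a (0 : F)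
  pp : ∀ y ∈ eigSp F a (1 : F) ⊔ eigSp F a (0 : F),
       ∀ z ∈ eigSp F a (1 : F) ⊔ eigSp F a (0 : F),
         y * z ∈ eigSp F a (1 : F) ⊔ eigSp F a (0 : F)
  pm : ∀ y ∈ eigSp F a (1 : F) ⊔ eigSp F a (0 : F), ∀ z ∈ eigSp F a η, y * z ∈ eigSp F a η
  mm : ∀ y ∈ eigSp F a η, ∀ z ∈ eigSp F a η,
         y * z ∈ eigSp F a (1 : F) ⊔ eigSp F a (0 : F)

/-- `τ` is the Miyamoto map of the axis `a`:  the `F`-linear map which is the identity on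
`A_1(a) ⊔ A_0(a)` and `-1` on `A_η(a)`. -/
def IsMiyamotoMap (η : F) (a : A) (τ : A →ₗ[F] A) : Prop :=
  (∀ y ∈ eigSp F a (1 : F) ⊔ eigSp F a (0 : F), τ y = y) ∧
  (∀ y ∈ eigSp F a η, τ y = -y)

set_option linter.unusedSectionVars false

lemma mem_eigSp {x y : A} {l : F} : y ∈ eigSp F x l ↔ x * y = l • y := Iff.rfl

lemma smul_cancel {c : F} {x : A} (hc : c ≠ 0) (h : c • x = 0) : x = 0 := by
  have := congrArg (fun w => c⁻¹ • w) h
  simpa [smul_smul, inv_mul_cancel₀ hc] using this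

lemma smul_inj {c : F} (hc : c ≠ 0) {x y : A} (h : c • x = c • y) : x = y := by
  have := congrArg (fun w => c⁻¹ • w) h
  simpa [smul_smul, inv_mul_cancel₀ hc] using this

lemma axis_mem_one {η : F} {a : A} (ha : IsPrimitiveAxis η a) : a ∈ eigSp F a 1 := by
  rw [mem_eigSp, ha.idem, one_smul]

lemma decomp_unique {η : F} {a : A} (ha : IsPrimitiveAxis η a)
    {s s' : F} {u u' v v' : A} (hu : u ∈ eigSp F a 0) (hu' : u' ∈ eigSp F a 0)
    (hv : v ∈ eigSp F a η) (hv' : v' ∈ eigSp F a η)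
    (h : s • a + u + v = s' • a + u' + v') : s = s' ∧ u = u' ∧ v = v' := by
  obtain ⟨t, -, hun⟩ := ha.decomp (s • a + u + v)
  have h1 : ((s, u, v) : F × A × A) = t := hun _ ⟨hu, hv, rfl⟩
  have h2 : ((s', u', v') : F × A × A) = t := hun _ ⟨hu', hv', h⟩
  have h3 := h1.trans h2.symm
  exact ⟨congrArg Prod.fst h3, congrArg (fun p => p.2.1) h3, congrArg (fun p => p.2.2) h3⟩

lemma axis_mul_decomp {η : F} {a : A} (ha : IsPrimitiveAxis η a) {φ : F} {α γ : A}
    (hα : α ∈ eigSp F a 0) (hγ : γ ∈ eigSp F a η) :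
    a * (φ • a + α + γ) = φ • a + η • γ := by
  rw [mul_add, mul_add, mul_smul_comm, ha.idem, mem_eigSp.mp hα, mem_eigSp.mp hγ,
    zero_smul, add_zero]

lemma tau_apply {η : F} {a : A} (ha : IsPrimitiveAxis η a) {τ : A →ₗ[F] A}
    (hτ : IsMiyamotoMap η a τ) {s : F} {u v : A}
    (hu : u ∈ eigSp F a 0) (hv : v ∈ eigSp F a η) :
    τ (s • a + u + v) = s • a + u - v := by
  have hP : s • a + u ∈ eigSp F a 1 ⊔ eigSp F a 0 :=
    add_mem (Submodule.mem_sup_left (Submodule.smul_mem _ _ (axis_mem_one ha)))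
      (Submodule.mem_sup_right hu)
  rw [map_add, hτ.1 _ hP, hτ.2 _ hv, sub_eq_add_neg]

lemma tau_tau {η : F} {a : A} (ha : IsPrimitiveAxis η a) {τ : A →ₗ[F] A}
    (hτ : IsMiyamotoMap η a τ) (x : A) : τ (τ x) = x := by
  obtain ⟨⟨s, u, v⟩, ⟨hu, hv, hx⟩, -⟩ := ha.decomp x
  dsimp only at hu hv hx
  have h1 : τ x = s • a + u + -v := by
    rw [hx, tau_apply ha hτ hu hv, sub_eq_add_neg]
  rw [h1, tau_apply ha hτ hu (neg_mem hv), hx]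
  abel

lemma tau_mul {η : F} {a : A} (ha : IsPrimitiveAxis η a) {τ : A →ₗ[F] A}
    (hτ : IsMiyamotoMap η a τ) (x y : A) : τ (x * y) = τ x * τ y := by
  obtain ⟨⟨s, u, v⟩, ⟨hu, hv, hx⟩, -⟩ := ha.decomp x
  dsimp only at hu hv hx
  obtain ⟨⟨t, w, z⟩, ⟨hw, hz, hy⟩, -⟩ := ha.decomp y
  dsimp only at hw hz hy
  have hPm : s • a + u ∈ eigSp F a 1 ⊔ eigSp F a 0 :=
    add_mem (Submodule.mem_sup_left (Submodule.smul_mem _ _ (axis_mem_one ha)))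
      (Submodule.mem_sup_right hu)
  have hQm : t • a + w ∈ eigSp F a 1 ⊔ eigSp F a 0 :=
    add_mem (Submodule.mem_sup_left (Submodule.smul_mem _ _ (axis_mem_one ha)))
      (Submodule.mem_sup_right hw)
  have hxy : x * y = ((s • a + u) * (t • a + w) + v * z)
      + ((s • a + u) * z + v * (t • a + w)) := by
    rw [hx, hy]
    simp only [add_mul, mul_add]
    abel
  have hm1 : (s • a + u) * (t • a + w) + v * z ∈ eigSp F a 1 ⊔ eigSp F a 0 :=
    add_mem (ha.pp _ hPm _ hQm) (ha.mm _ hv _ hz)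
  have hm2 : (s • a + u) * z + v * (t • a + w) ∈ eigSp F a η := by
    refine add_mem (ha.pm _ hPm _ hz) ?_
    rw [mul_comm]
    exact ha.pm _ hQm _ hv
  have hτx : τ x = (s • a + u) - v := by rw [hx, tau_apply ha hτ hu hv]
  have hτy : τ y = (t • a + w) - z := by rw [hy, tau_apply ha hτ hw hz]
  rw [hxy, map_add, hτ.1 _ hm1, hτ.2 _ hm2, hτx, hτy, sub_mul, mul_sub, mul_sub]
  abel

lemma tau_comm {η : F} {a b : A} (ha : IsPrimitiveAxis η a) (hb : IsPrimitiveAxis η b)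
    {τa τb : A →ₗ[F] A} (hτa : IsMiyamotoMap η a τa) (hτb : IsMiyamotoMap η b τb)
    (hfix : τa b = b) (x : A) : τa (τb x) = τb (τa x) := by
  obtain ⟨⟨s, u, v⟩, ⟨hu, hv, hx⟩, -⟩ := hb.decomp x
  dsimp only at hu hv hx
  have hu' : τa u ∈ eigSp F b 0 := by
    rw [mem_eigSp, ← hfix, ← tau_mul ha hτa, mem_eigSp.mp hu, zero_smul, zero_smul, map_zero]
  have hv' : τa v ∈ eigSp F b η := by
    rw [mem_eigSp, ← hfix, ← tau_mul ha hτa, mem_eigSp.mp hv, map_smul]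
  have h1 : τa (τb x) = s • b + τa u - τa v := by
    rw [hx, tau_apply hb hτb hu hv, map_sub, map_add, map_smul, hfix]
  have h2 : τa x = s • b + τa u + τa v := by
    rw [hx, map_add, map_add, map_smul, hfix]
  rw [h1, h2, tau_apply hb hτb hu' hv']

lemma tau_braid {η : F} {a b : A} (ha : IsPrimitiveAxis η a) (hb : IsPrimitiveAxis η b)
    {τa τb : A →ₗ[F] A} (hτa : IsMiyamotoMap η a τa) (hτb : IsMiyamotoMap η b τb)
    (hc : τa b = τb a) (x : A) : τa (τb (τa x)) = τb (τa (τb x)) := by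
  obtain ⟨⟨s, p, q⟩, ⟨hp, hq, h1⟩, -⟩ := hb.decomp (τa x)
  dsimp only at hp hq h1
  obtain ⟨⟨t, p', q'⟩, ⟨hp', hq', h2⟩, -⟩ := ha.decomp (τb x)
  dsimp only at hp' hq' h2
  have hba : τa (τb a) = b := by rw [← hc, tau_tau ha hτa]
  have hp'' : τa (τb p') ∈ eigSp F b 0 := by
    rw [mem_eigSp, ← hba, ← tau_mul ha hτa, ← tau_mul hb hτb,
      mem_eigSp.mp hp', zero_smul, zero_smul, map_zero, map_zero]
  have hq'' : τa (τb q') ∈ eigSp F b η := by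
    rw [mem_eigSp, ← hba, ← tau_mul ha hτa, ← tau_mul hb hτb,
      mem_eigSp.mp hq', map_smul, map_smul]
  have hx2 : x = t • (τb a) + τb p' + τb q' := by
    have h4 := congrArg τb h2
    rwa [tau_tau hb hτb, map_add, map_add, map_smul] at h4
  have h3 : τa x = t • b + τa (τb p') + τa (τb q') := by
    have h5 := congrArg τa hx2
    rwa [map_add, map_add, map_smul, hba] at h5
  obtain ⟨hst, hpp, hqq⟩ := decomp_unique hb hp hp'' hq hq'' (h1.symm.trans h3)
  have hτap : τa p = τb p' := by rw [hpp, tau_tau ha hτa]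
  have hτaq : τa q = τb q' := by rw [hqq, tau_tau ha hτa]
  calc τa (τb (τa x)) = τa (s • b + p - q) := by rw [h1, tau_apply hb hτb hp hq]
    _ = s • (τa b) + τa p - τa q := by rw [map_sub, map_add, map_smul]
    _ = t • (τb a) + τb p' - τb q' := by rw [hst, hc, hτap, hτaq]
    _ = τb (t • a + p' - q') := by rw [map_sub, map_add, map_smul]
    _ = τb (τa (τb x)) := by rw [h2, tau_apply ha hτa hp' hq']

lemma key_eq {η : F} (h2 : (2 : F) ≠ 0) {a b : A} (ha : IsPrimitiveAxis η a)
    (hbb : b * b = b) {φ ψ : F} {α γ δ : A}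
    (hα : α ∈ eigSp F a 0) (hγ : γ ∈ eigSp F a η) (hbeq : b = φ • a + α + γ)
    (hδ : δ ∈ eigSp F b η) (hδeq : η • δ = φ • a + η • γ - ψ • b)
    (hγ0 : γ ≠ 0) : 2 * (φ * η) + η - 2 * ψ = 2 * η ^ 2 - 2 * (η * ψ) := by
  have haα : a * α = 0 := by rw [mem_eigSp.mp hα, zero_smul]
  have haγ : a * γ = η • γ := mem_eigSp.mp hγ
  have hαa : α * a = 0 := by rw [mul_comm]; exact haα
  have hγa : γ * a = η • γ := by rw [mul_comm]; exact haγ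
  have hγα : γ * α = α * γ := mul_comm γ α
  have hab : a * b = φ • a + η • γ := by rw [hbeq]; exact axis_mul_decomp ha hα hγ
  have hmm : γ * γ ∈ eigSp F a 1 ⊔ eigSp F a 0 := ha.mm γ hγ γ hγ
  rw [Submodule.mem_sup] at hmm
  obtain ⟨y, hy, z, hz, hyz⟩ := hmm
  rw [ha.prim, Submodule.mem_span_singleton] at hy
  obtain ⟨s₂, rfl⟩ := hy
  have hγγ : γ * γ = s₂ • a + z := hyz.symm
  have hαγm : α * γ ∈ eigSp F a η := ha.pm α (Submodule.mem_sup_right hα) γ hγ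
  have hbbexp : b * b = (φ * φ + s₂) • a + (α * α + z)
      + (((2 : F) * (φ * η)) • γ + (2 : F) • (α * γ)) := by
    rw [hbeq]
    simp only [add_mul, mul_add, smul_mul_assoc, mul_smul_comm, ha.idem, haα, haγ, hαa,
      hγa, hγα, hγγ, smul_zero, zero_add, add_zero]
    module
  obtain ⟨-, -, hv3⟩ := decomp_unique ha (add_mem (ha.zz α hα α hα) hz) hα
    (add_mem (Submodule.smul_mem _ _ hγ) (Submodule.smul_mem _ _ hαγm)) hγ
    (hbbexp.symm.trans (hbb.trans hbeq))
  have hαγ2 : (2 : F) • (α * γ) = (1 - 2 * (φ * η)) • γ := by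
    calc (2 : F) • (α * γ)
        = ((2 : F) * (φ * η)) • γ + (2 : F) • (α * γ) - ((2 : F) * (φ * η)) • γ := by
          module
      _ = γ - ((2 : F) * (φ * η)) • γ := by rw [hv3]
      _ = (1 - 2 * (φ * η)) • γ := by module
  have hbγ : b * γ = s₂ • a + z + ((φ * η) • γ + α * γ) := by
    rw [hbeq]
    simp only [add_mul, smul_mul_assoc, haγ, hγγ]
    module
  have hbδ : b * δ = η • δ := mem_eigSp.mp hδ
  have hW1 : b * (η • δ) = (η * φ - η * (ψ * φ)) • a + (-(η * ψ)) • α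
      + (η * η - η * ψ) • γ := by
    rw [mul_smul_comm, hbδ, hδeq, hbeq]
    module
  have hW2 : b * (η • δ) = (φ * φ + η * s₂ - ψ * φ) • a + (η • z - ψ • α)
      + ((φ * η + η * (φ * η) - ψ) • γ + η • (α * γ)) := by
    rw [hδeq, mul_sub, mul_add]
    simp only [mul_smul_comm]
    rw [hbb, mul_comm b a, hab, hbγ, hbeq]
    module
  obtain ⟨-, -, hVeq⟩ := decomp_unique ha
    (Submodule.smul_mem _ _ hα)
    (sub_mem (Submodule.smul_mem _ _ hz) (Submodule.smul_mem _ _ hα))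
    (Submodule.smul_mem _ _ hγ)
    (add_mem (Submodule.smul_mem _ _ hγ) (Submodule.smul_mem _ _ hαγm))
    (hW1.symm.trans hW2)
  have hVeq2 : ((2 : F) * (η * η - η * ψ)) • γ
      = ((2 : F) * (φ * η + η * (φ * η) - ψ) + η * (1 - 2 * (φ * η))) • γ := by
    calc ((2 : F) * (η * η - η * ψ)) • γ
        = (2 : F) • ((η * η - η * ψ) • γ) := by module
      _ = (2 : F) • ((φ * η + η * (φ * η) - ψ) • γ + η • (α * γ)) := by rw [hVeq]
      _ = ((2 : F) * (φ * η + η * (φ * η) - ψ)) • γ + η • ((2 : F) • (α * γ)) := by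
          rw [smul_add, smul_smul, smul_comm]
      _ = ((2 : F) * (φ * η + η * (φ * η) - ψ) + η * (1 - 2 * (φ * η))) • γ := by
          rw [hαγ2]
          module
  have h9 : (((2 : F) * (η * η - η * ψ))
      - ((2 : F) * (φ * η + η * (φ * η) - ψ) + η * (1 - 2 * (φ * η)))) • γ = 0 := by
    rw [sub_smul, hVeq2, sub_self]
  have h10 : ((2 : F) * (η * η - η * ψ))
      - ((2 : F) * (φ * η + η * (φ * η) - ψ) + η * (1 - 2 * (φ * η))) = 0 := by
    by_contra hd
    exact hγ0 (smul_cancel hd h9)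
  linear_combination -h10
/-- for `η ≠ 1/2` and primitive axes `a`, `b` of Jordan type `η`, the
order of `τ(a) ∘ τ(b)` is `1`, `2` or `3`. -/
theorem miyamoto_product_order
    (h2 : (2 : F) ≠ 0) (η : F) (hη0 : η ≠ 0) (hη1 : η ≠ 1) (hη2 : η ≠ 1 / 2)
    (a b : A) (ha : IsPrimitiveAxis η a) (hb : IsPrimitiveAxis η b)
    (τa τb : A →ₗ[F] A)
    (hτa : IsMiyamotoMap η a τa) (hτb : IsMiyamotoMap η b τb) :
    τa = τb ∨
    ((τa ∘ₗ τb) ∘ₗ (τa ∘ₗ τb) = LinearMap.id ∧ τa ≠ τb) ∨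
    (((τa ∘ₗ τb) ∘ₗ (τa ∘ₗ τb)) ∘ₗ (τa ∘ₗ τb) = LinearMap.id ∧
      (τa ∘ₗ τb) ∘ₗ (τa ∘ₗ τb) ≠ LinearMap.id) := by
  obtain ⟨⟨φ, α, γ⟩, ⟨hα, hγ, hbeq⟩, -⟩ := ha.decomp b
  dsimp only at hα hγ hbeq
  obtain ⟨⟨ψ, β, δ⟩, ⟨hβ, hδ, haeq⟩, -⟩ := hb.decomp a
  dsimp only at hβ hδ haeq
  have hmain : (τa ∘ₗ τb) ∘ₗ (τa ∘ₗ τb) = LinearMap.id ∨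
      ((τa ∘ₗ τb) ∘ₗ (τa ∘ₗ τb)) ∘ₗ (τa ∘ₗ τb) = LinearMap.id := by
    by_cases hγ0 : γ = 0
    · left
      have hfix : τa b = b := by
        rw [hbeq, tau_apply ha hτa hα hγ, hγ0]
        abel
      have hcomm := tau_comm ha hb hτa hτb hfix
      ext x
      simp only [LinearMap.comp_apply, LinearMap.id_apply]
      rw [← hcomm (τb x), tau_tau hb hτb, tau_tau ha hτa]
    · by_cases hδ0 : δ = 0
      · left
        have hfix : τb a = a := by
          rw [haeq, tau_apply hb hτb hβ hδ, hδ0]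
          abel
        have hcomm := tau_comm hb ha hτb hτa hfix
        ext x
        simp only [LinearMap.comp_apply, LinearMap.id_apply]
        rw [← hcomm x, tau_tau hb hτb, tau_tau ha hτa]
      · right
        have hab : a * b = φ • a + η • γ := by
          rw [hbeq]; exact axis_mul_decomp ha hα hγ
        have hba : b * a = ψ • b + η • δ := by
          rw [haeq]; exact axis_mul_decomp hb hβ hδ
        have h5 : ψ • b + η • δ = φ • a + η • γ := by
          rw [← hba, mul_comm b a]; exact hab
        have hδeq : η • δ = φ • a + η • γ - ψ • b := by
          rw [← h5]; abel
        have hγeq : η • γ = ψ • b + η • δ - φ • a := by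
          rw [hδeq]; abel
        have E1 := key_eq h2 ha hb.idem hα hγ hbeq hδ hδeq hγ0
        have E2 := key_eq h2 hb ha.idem hβ hδ haeq hγ hγeq hδ0
        have h12 : (2 : F) * (φ - ψ) = 0 := by linear_combination E1 - E2
        have hφψ : φ = ψ := sub_eq_zero.mp ((mul_eq_zero.mp h12).resolve_left h2)
        have hkey : (2 * η - 1) ≠ 0 := by
          intro h
          exact hη2 ((eq_div_iff h2).mpr (by linear_combination h))
        rw [← hφψ] at E1
        have h13 : (2 * η - 1) * ((2 : F) * φ - η) = 0 := by linear_combination E1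
        have hφ2 : (2 : F) * φ = η :=
          sub_eq_zero.mp ((mul_eq_zero.mp h13).resolve_left hkey)
        have hψ2 : (2 : F) * ψ = η := by rw [← hφψ]; exact hφ2
        have h2δeq : ((2 : F) * η) • δ = η • a + ((2 : F) * η) • γ - η • b := by
          rw [mul_smul, hδeq, smul_sub, smul_add, smul_smul, smul_smul, smul_smul,
            hφ2, hψ2]
        have hc : τa b = τb a := by
          have h6 : τa b = b - (2 : F) • γ := by
            rw [hbeq, tau_apply ha hτa hα hγ]
            module
          have h7 : τb a = a - (2 : F) • δ := by
            rw [haeq, tau_apply hb hτb hβ hδ]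
            module
          rw [h6, h7]
          refine smul_inj (c := (2 : F) * η) (mul_ne_zero h2 hη0) ?_
          rw [smul_sub, smul_sub, smul_comm ((2 : F) * η) (2 : F) δ, h2δeq]
          module
        have hbr := tau_braid ha hb hτa hτb hc
        ext x
        simp only [LinearMap.comp_apply, LinearMap.id_apply]
        rw [← hbr x, tau_tau ha hτa, tau_tau hb hτb, tau_tau ha hτa]
  by_cases hτ : τa = τb
  · exact Or.inl hτ
  · by_cases hsq : (τa ∘ₗ τb) ∘ₗ (τa ∘ₗ τb) = LinearMap.id
    · exact Or.inr (Or.inl ⟨hsq, hτ⟩)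
    · rcases hmain with h | h
      · exact absurd h hsq
      · exact Or.inr (Or.inr ⟨h, hsq⟩)
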